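/- If f : S → R is a betweenness isomorphism between subsets S, R of the Euclidean plane and A ⊆ S, then f maps the collinear hull of A in S onto the collinear hull of f(A) in R, i.e., f(ch_S(A)) = ch_R(f(A)). -/

import Mathlib

/-- The open segment `(a,b) = [a,b] \ {a,b}`. -/
def oseg (a b : ℝ × ℝ) : Set (ℝ × ℝ) := segment ℝ a b \ {a, b}

/-- `f` is a betweenness isomorphism of `S` and `R`. -/
def BIso (S R : Set (ℝ × ℝ)) (f : ℝ × ℝ → ℝ × ℝ) : Prop :=
  Set.BijOn f S R ∧
    ∀ a ∈ S, ∀ b ∈ S, ∀ c ∈ S, (c ∈ oseg a b ↔ f c ∈ oseg (f a) (f b))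

/-- `B` is collinearly closed in `S`. -/
def CollClosed (S B : Set (ℝ × ℝ)) : Prop :=
  ∀ c ∈ S, (∃ a ∈ B \ {c}, ∃ b ∈ B \ {c}, a ≠ b ∧ Collinear ℝ {a, b, c}) → c ∈ B

/-- The collinear hull of `A` in `S`: the smallest subset of `S` containing `A`
which is collinearly closed in `S`. -/
def chull (S A : Set (ℝ × ℝ)) : Set (ℝ × ℝ) :=
  ⋂₀ {B | A ⊆ B ∧ B ⊆ S ∧ CollClosed S B}

/-! Three distinct points are collinear exactly when one of them lies strictly between the
other two, so a betweenness isomorphism `f` preserves and reflects collinearity of triples of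
distinct points. Hence `f` carries collinearly closed subsets of `S` to collinearly closed
subsets of `R`, and pulls collinearly closed subsets of `R` back to collinearly closed subsets
of `S`; by minimality of the hulls this gives both inclusions. -/

open Set

lemma mem_oseg_iff_wbtw {a b c : ℝ × ℝ} :
    c ∈ oseg a b ↔ Wbtw ℝ a c b ∧ c ≠ a ∧ c ≠ b := by
  simp [oseg, mem_segment_iff_wbtw]

lemma collinear_iff_mem_oseg {a b c : ℝ × ℝ} (hab : a ≠ b) (hac : a ≠ c) (hbc : b ≠ c) :
    Collinear ℝ ({a, b, c} : Set (ℝ × ℝ)) ↔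
      a ∈ oseg b c ∨ b ∈ oseg a c ∨ c ∈ oseg a b := by
  simp only [mem_oseg_iff_wbtw]
  constructor
  · intro h
    rcases h.wbtw_or_wbtw_or_wbtw with h | h | h
    · exact Or.inr (Or.inl ⟨h, hab.symm, hbc⟩)
    · exact Or.inr (Or.inr ⟨h.symm, hac.symm, hbc.symm⟩)
    · exact Or.inl ⟨h.symm, hab, hac⟩
  · rintro (⟨h, -⟩ | ⟨h, -⟩ | ⟨h, -⟩)
    · rw [insert_comm]; exact h.collinear
    · exact h.collinear
    · rw [pair_comm]; exact h.collinear

section CollinearHull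

variable {S A B : Set (ℝ × ℝ)}

lemma subset_chull : A ⊆ chull S A :=
  fun _ hx _ hB => hB.1 hx

lemma chull_subset_ambient (hA : A ⊆ S) : chull S A ⊆ S :=
  sInter_subset_of_mem ⟨hA, subset_rfl, fun _ hc _ => hc⟩

lemma collClosed_chull : CollClosed S (chull S A) := by
  rintro c hc ⟨a, ha, b, hb, hab, hcol⟩ B hB
  exact hB.2.2 c hc ⟨a, ⟨ha.1 B hB, ha.2⟩, b, ⟨hb.1 B hB, hb.2⟩, hab, hcol⟩

lemma chull_subset_of_collClosed (hAB : A ⊆ B) (hBS : B ⊆ S) (hB : CollClosed S B) :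
    chull S A ⊆ B :=
  sInter_subset_of_mem ⟨hAB, hBS, hB⟩

end CollinearHull

namespace BIso

variable {S R B : Set (ℝ × ℝ)} {f : ℝ × ℝ → ℝ × ℝ}

lemma collinear_image_iff (hf : BIso S R f) {a b c : ℝ × ℝ} (ha : a ∈ S) (hb : b ∈ S)
    (hc : c ∈ S) (hab : a ≠ b) (hac : a ≠ c) (hbc : b ≠ c) :
    Collinear ℝ ({f a, f b, f c} : Set (ℝ × ℝ)) ↔ Collinear ℝ ({a, b, c} : Set (ℝ × ℝ)) := by
  have inj := hf.1.injOn
  rw [collinear_iff_mem_oseg hab hac hbc,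
    collinear_iff_mem_oseg ((inj.ne_iff ha hb).2 hab) ((inj.ne_iff ha hc).2 hac)
      ((inj.ne_iff hb hc).2 hbc),
    hf.2 b hb c hc a ha, hf.2 a ha c hc b hb, hf.2 a ha b hb c hc]

lemma collClosed_image (hf : BIso S R f) (hBS : B ⊆ S) (hB : CollClosed S B) :
    CollClosed R (f '' B) := by
  rintro _ hc' ⟨_, ⟨⟨a, ha, rfl⟩, hac⟩, _, ⟨⟨b, hb, rfl⟩, hbc⟩, hab, hcol⟩
  obtain ⟨c, hc, rfl⟩ := hf.1.surjOn hc'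
  have inj := hf.1.injOn
  rw [mem_singleton_iff, inj.eq_iff (hBS ha) hc] at hac
  rw [mem_singleton_iff, inj.eq_iff (hBS hb) hc] at hbc
  have hab : a ≠ b := fun h => hab (congrArg f h)
  rw [hf.collinear_image_iff (hBS ha) (hBS hb) hc hab hac hbc] at hcol
  exact mem_image_of_mem f (hB c hc ⟨a, ⟨ha, hac⟩, b, ⟨hb, hbc⟩, hab, hcol⟩)

lemma collClosed_inter_preimage (hf : BIso S R f) (hB : CollClosed R B) :
    CollClosed S (S ∩ f ⁻¹' B) := by
  rintro c hc ⟨a, ⟨⟨ha, hfa⟩, hac⟩, b, ⟨⟨hb, hfb⟩, hbc⟩, hab, hcol⟩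
  have inj := hf.1.injOn
  rw [mem_singleton_iff] at hac hbc
  rw [← hf.collinear_image_iff ha hb hc hab hac hbc] at hcol
  refine ⟨hc, hB (f c) (hf.1.mapsTo hc) ⟨f a, ⟨hfa, ?_⟩, f b, ⟨hfb, ?_⟩, ?_, hcol⟩⟩
  · exact (inj.ne_iff ha hc).2 hac
  · exact (inj.ne_iff hb hc).2 hbc
  · exact (inj.ne_iff ha hb).2 hab

end BIso

/-- A betweenness isomorphism maps the collinear hull of `A ⊆ S` in `S` onto the
collinear hull of `f(A)` in `R`. -/
theorem stmt_2 (S R : Set (ℝ × ℝ)) (f : ℝ × ℝ → ℝ × ℝ) (hf : BIso S R f)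
    (A : Set (ℝ × ℝ)) (hA : A ⊆ S) :
    f '' chull S A = chull R (f '' A) := by
  apply Subset.antisymm
  · have hpre : chull S A ⊆ S ∩ f ⁻¹' chull R (f '' A) :=
      chull_subset_of_collClosed (fun x hx => ⟨hA hx, subset_chull (mem_image_of_mem f hx)⟩)
        inter_subset_left (hf.collClosed_inter_preimage collClosed_chull)
    exact image_subset_iff.2 fun x hx => (hpre hx).2
  · have hCS : chull S A ⊆ S := chull_subset_ambient hA
    exact chull_subset_of_collClosed (image_mono subset_chull)
      ((hf.1.mapsTo.mono_left hCS).image_subset) (hf.collClosed_image hCS collClosed_chull)
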